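/- Let R = ((A_i, B_i))_{i<n} be a finite family of conditionals over Ω and let κ be an OCF with κ(A_i) ≠ ∞ for all i < n. Then κ is indifferent with respect to R if and only if condition (i) of the definition of indifference holds and there exist rational numbers κ₀ and κ_i⁺, κ_i⁻ (i < n) such that for every world ω with κ(ω) ≠ ∞: (κ(ω) : ℚ) = κ₀ + Σ_{i : ω ∈ A_i∩B_i} κ_i⁺ + Σ_{i : ω ∈ A_i∩B_iᶜ} κ_i⁻. -/
import Mathlib



open scoped Classical

private lemma dual_mem_span' {V : Type*} [AddCommGroup V] [Module ℚ V]
    (U : Submodule ℚ V) (v : V)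
    (h : ∀ φ : Module.Dual ℚ V, (∀ u ∈ U, φ u = 0) → φ v = 0) : v ∈ U := by
  by_contra hv
  have hq : U.mkQ v ≠ 0 := fun h0 => hv (by simpa [Submodule.Quotient.mk_eq_zero] using h0)
  obtain ⟨ψ, hψ⟩ : ∃ ψ : Module.Dual ℚ (V ⧸ U), ψ (U.mkQ v) ≠ 0 := by
    by_contra hh; push_neg at hh
    exact hq ((Module.forall_dual_apply_eq_zero_iff ℚ _).mp hh)
  refine hψ (h (ψ.comp U.mkQ) fun u hu => ?_)
  have h0 : U.mkQ u = 0 := (Submodule.Quotient.mk_eq_zero U).mpr hu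
  rw [LinearMap.comp_apply, h0, map_zero]

private lemma sum_transfer' {Ω : Type*} [Fintype Ω] (p : Ω → Prop) (g : Ω → ℤ)
    (hg : ∀ ω, ¬ p ω → g ω = 0) :
    ∑ ω, g ω = ∑ ω : {ω // p ω}, g ω := by
  have h0 : ∑ x : {x // ¬ p x}, g x.1 = 0 := Finset.sum_eq_zero fun x _ => hg x.1 x.2
  rw [← Fintype.sum_subtype_add_sum_subtype p g, h0, add_zero]

private lemma dual_eq_sum' {ι : Type*} [Fintype ι] [DecidableEq ι]
    (φ : Module.Dual ℚ (ι → ℚ)) (x : ι → ℚ) :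
    φ x = ∑ i, x i * φ (Pi.single i 1) := by
  have hx : x = ∑ i : ι, x i • (Pi.single i (1:ℚ) : ι → ℚ) := by
    funext j
    simp [Finset.sum_apply, Pi.single_apply]
  conv_lhs => rw [hx]
  rw [map_sum]
  exact Finset.sum_congr rfl fun i _ => by rw [map_smul, smul_eq_mul]


/-- The rank of a set of worlds under an OCF: the infimum of `κ` over the set. -/
noncomputable def ocfRank {Ω : Type*} (κ : Ω → ℕ∞) (S : Set Ω) : ℕ∞ :=
  ⨅ ω ∈ S, κ ω

/-- The conditional-structure map of a finite family of conditionals. -/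
noncomputable def sigmaR {Ω : Type*} {n : ℕ} (R : Fin n → Set Ω × Set Ω) (ω : Ω) :
    (Fin n → ℤ) × (Fin n → ℤ) :=
  (fun i => if ω ∈ (R i).1 ∩ (R i).2 then 1 else 0,
   fun i => if ω ∈ (R i).1 ∩ ((R i).2)ᶜ then 1 else 0)

/-- The `i`-th component pair of the conditional structure of a world. -/
noncomputable def sigmai {Ω : Type*} {n : ℕ} (R : Fin n → Set Ω × Set Ω)
    (i : Fin n) (ω : Ω) : ℤ × ℤ :=
  ((sigmaR R ω).1 i, (sigmaR R ω).2 i)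

/-- Condition (i) of the definition of indifference. -/
noncomputable def IndiffCondI {Ω : Type*} {n : ℕ}
    (κ : Ω → ℕ∞) (R : Fin n → Set Ω × Set Ω) : Prop :=
  ∀ ω, κ ω = ⊤ → ∃ i, sigmai R i ω ≠ (0, 0) ∧
      ∀ ω', sigmai R i ω' = sigmai R i ω → κ ω' = ⊤

/-- An OCF `κ` is indifferent with respect to a family `R` of conditionals. -/
noncomputable def Indifferent {Ω : Type*} [Fintype Ω] {n : ℕ}
    (κ : Ω → ℕ∞) (R : Fin n → Set Ω × Set Ω) : Prop :=
  IndiffCondI κ R ∧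
  (∀ d : Ω → ℤ, (∀ ω, κ ω = ⊤ → d ω = 0) →
    ∑ ω, d ω = 0 → ∑ ω, d ω • sigmaR R ω = 0 →
    ∑ ω, d ω * ((κ ω).toNat : ℤ) = 0)

/-- Characterization of conditional indifference for OCFs: `κ` is indifferent
w.r.t. `R` iff condition (i) holds and `κ` decomposes additively into rational
constants `κ₀, κᵢ⁺, κᵢ⁻` following the conditional structures of worlds. -/
theorem stmt3 {Ω : Type*} [Fintype Ω] [Nonempty Ω] {n : ℕ}
    (R : Fin n → Set Ω × Set Ω) (κ : Ω → ℕ∞) (hκ : ∃ ω, κ ω = 0)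
    (hA : ∀ i, ocfRank κ (R i).1 ≠ ⊤) :
    Indifferent κ R ↔
      (IndiffCondI κ R ∧
       ∃ (κ₀ : ℚ) (kp km : Fin n → ℚ), ∀ ω, κ ω ≠ ⊤ →
         ((κ ω).toNat : ℚ) = κ₀ +
           (∑ i ∈ Finset.univ.filter fun i => ω ∈ (R i).1 ∩ (R i).2, kp i) +
           (∑ i ∈ Finset.univ.filter fun i => ω ∈ (R i).1 ∩ ((R i).2)ᶜ, km i)) := by
  constructor
  · rintro ⟨h1, h2⟩
    refine ⟨h1, ?_⟩
    have hvmem : (fun ω : Ω => if κ ω = ⊤ then (0:ℚ) else (((κ ω).toNat : ℤ) : ℚ)) ∈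
        Submodule.span ℚ (Set.range (fun j : Unit ⊕ (Fin n ⊕ Fin n) =>
          (fun ω : Ω => if κ ω = ⊤ then (0:ℚ) else
            Sum.elim (fun _ => (1:ℚ))
              (Sum.elim (fun i => if ω ∈ (R i).1 ∩ (R i).2 then (1:ℚ) else 0)
                        (fun i => if ω ∈ (R i).1 ∩ ((R i).2)ᶜ then (1:ℚ) else 0)) j))) := by
      apply dual_mem_span'
      intro φ hφ
      set d : Ω → ℚ := fun ω => φ (Pi.single ω 1) with hd
      have hkey : ∀ x : Ω → ℚ, φ x = ∑ ω, x ω * d ω := fun x => dual_eq_sum' φ x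
      have hgen : ∀ j, φ (fun ω : Ω => if κ ω = ⊤ then (0:ℚ) else
          Sum.elim (fun _ => (1:ℚ))
            (Sum.elim (fun i => if ω ∈ (R i).1 ∩ (R i).2 then (1:ℚ) else 0)
                      (fun i => if ω ∈ (R i).1 ∩ ((R i).2)ᶜ then (1:ℚ) else 0)) j) = 0 :=
        fun j => hφ _ (Submodule.subset_span ⟨j, rfl⟩)
      have hd0 : ∑ ω, (if κ ω = ⊤ then (0:ℚ) else d ω) = 0 := by
        have h := hgen (Sum.inl ())
        rw [hkey] at h
        refine Eq.trans (Finset.sum_congr rfl fun ω _ => ?_) h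
        by_cases h1 : κ ω = ⊤ <;> simp [h1]
      have hdp : ∀ i, ∑ ω, (if κ ω = ⊤ then (0:ℚ) else
          if ω ∈ (R i).1 ∩ (R i).2 then d ω else 0) = 0 := by
        intro i
        have h := hgen (Sum.inr (Sum.inl i))
        rw [hkey] at h
        refine Eq.trans (Finset.sum_congr rfl fun ω _ => ?_) h
        by_cases h1 : κ ω = ⊤
        · simp [h1]
        · by_cases h2 : ω ∈ (R i).1 ∧ ω ∈ (R i).2 <;>
            simp [h1, h2, Set.mem_inter_iff, Set.mem_compl_iff]
      have hdm : ∀ i, ∑ ω, (if κ ω = ⊤ then (0:ℚ) else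
          if ω ∈ (R i).1 ∩ ((R i).2)ᶜ then d ω else 0) = 0 := by
        intro i
        have h := hgen (Sum.inr (Sum.inr i))
        rw [hkey] at h
        refine Eq.trans (Finset.sum_congr rfl fun ω _ => ?_) h
        by_cases h1 : κ ω = ⊤
        · simp [h1]
        · by_cases h2 : ω ∈ (R i).1 ∧ ω ∉ (R i).2 <;>
            simp [h1, h2, Set.mem_inter_iff, Set.mem_compl_iff]
      -- clear denominators
      set N : ℕ := ∏ ω, (d ω).den with hN
      have hNpos : 0 < N := Finset.prod_pos fun ω _ => (d ω).pos
      have he' : ∀ ω, ((((N:ℚ) * d ω).num : ℤ) : ℚ) = (N:ℚ) * d ω := by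
        intro ω
        obtain ⟨M, hM⟩ := Finset.dvd_prod_of_mem (fun ω => (d ω).den) (Finset.mem_univ ω)
        have hk : (((d ω).num * (M:ℤ) : ℤ) : ℚ) = (N:ℚ) * d ω := by
          have h1 : ((d ω).num : ℚ) = d ω * (d ω).den := (Rat.mul_den_eq_num _).symm
          rw [← hN] at hM
          push_cast [hM, h1]
          ring
        rw [show (N:ℚ) * d ω = (((d ω).num * (M:ℤ) : ℤ) : ℚ) from hk.symm,
          Rat.num_intCast, hk]
      set D : Ω → ℤ := fun ω => if κ ω = ⊤ then 0 else ((N:ℚ) * d ω).num with hD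
      have hDz : ∀ ω, κ ω = ⊤ → D ω = 0 := fun ω h => if_pos h
      have hDcast : ∀ ω, ((D ω : ℤ) : ℚ) =
          (N:ℚ) * (if κ ω = ⊤ then (0:ℚ) else d ω) := by
        intro ω
        by_cases h1 : κ ω = ⊤ <;> simp [hD, h1, he']
      clear_value D
      have hN0 : (N:ℚ) ≠ 0 := Nat.cast_ne_zero.mpr hNpos.ne'
      clear_value N
      have hb : ∑ ω, D ω = 0 := by
        have hq : ((∑ ω, D ω : ℤ) : ℚ) = 0 := by
          push_cast
          rw [Finset.sum_congr rfl fun ω _ => hDcast ω, ← Finset.mul_sum, hd0, mul_zero]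
        exact_mod_cast hq
      have hc : ∑ ω, D ω • sigmaR R ω = 0 := by
        refine Prod.ext_iff.mpr ⟨?_, ?_⟩
        · funext i
          rw [Prod.fst_sum, Finset.sum_apply]
          simp only [Prod.smul_fst, Pi.smul_apply, smul_eq_mul, sigmaR]
          have hq : ((∑ ω, D ω * (if ω ∈ (R i).1 ∩ (R i).2 then (1:ℤ) else 0) : ℤ) : ℚ)
              = 0 := by
            push_cast [apply_ite (fun z : ℤ => (z : ℚ))]
            calc ∑ ω, (D ω : ℚ) * (if ω ∈ (R i).1 ∩ (R i).2 then (1:ℚ) else 0)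
                = ∑ ω, (N:ℚ) * (if κ ω = ⊤ then (0:ℚ) else
                    if ω ∈ (R i).1 ∩ (R i).2 then d ω else 0) := by
                  refine Finset.sum_congr rfl fun ω _ => ?_
                  rw [hDcast ω]
                  by_cases h1 : κ ω = ⊤
                  · simp [h1]
                  · by_cases h2 : ω ∈ (R i).1 ∧ ω ∈ (R i).2 <;>
                      simp [h1, h2, Set.mem_inter_iff, Set.mem_compl_iff]
              _ = 0 := by rw [← Finset.mul_sum, hdp i, mul_zero]
          exact_mod_cast hq
        · funext i
          rw [Prod.snd_sum, Finset.sum_apply]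
          simp only [Prod.smul_snd, Pi.smul_apply, smul_eq_mul, sigmaR]
          have hq : ((∑ ω, D ω * (if ω ∈ (R i).1 ∩ ((R i).2)ᶜ then (1:ℤ) else 0) : ℤ) : ℚ)
              = 0 := by
            push_cast [apply_ite (fun z : ℤ => (z : ℚ))]
            calc ∑ ω, (D ω : ℚ) * (if ω ∈ (R i).1 ∩ ((R i).2)ᶜ then (1:ℚ) else 0)
                = ∑ ω, (N:ℚ) * (if κ ω = ⊤ then (0:ℚ) else
                    if ω ∈ (R i).1 ∩ ((R i).2)ᶜ then d ω else 0) := by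
                  refine Finset.sum_congr rfl fun ω _ => ?_
                  rw [hDcast ω]
                  by_cases h1 : κ ω = ⊤
                  · simp [h1]
                  · by_cases h2 : ω ∈ (R i).1 ∧ ω ∉ (R i).2 <;>
                      simp [h1, h2, Set.mem_inter_iff, Set.mem_compl_iff]
              _ = 0 := by rw [← Finset.mul_sum, hdm i, mul_zero]
          exact_mod_cast hq
      have hcon := h2 D hDz hb hc
      rw [hkey]
      have hq : (N:ℚ) * ∑ ω,
          (if κ ω = ⊤ then (0:ℚ) else (((κ ω).toNat : ℤ) : ℚ)) * d ω = 0 := by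
        have hcast : ((∑ ω, D ω * ((κ ω).toNat : ℤ) : ℤ) : ℚ) = 0 := by
          exact_mod_cast hcon
        push_cast at hcast
        rw [Finset.mul_sum]
        refine Eq.trans (Finset.sum_congr rfl fun ω _ => ?_) hcast
        rw [hDcast ω]
        by_cases h1 : κ ω = ⊤ <;> simp [h1] <;> ring
      exact (mul_eq_zero.mp hq).resolve_left hN0
    rw [Submodule.mem_span_range_iff_exists_fun ℚ] at hvmem
    obtain ⟨c, hc⟩ := hvmem
    refine ⟨c (Sum.inl ()), fun i => c (Sum.inr (Sum.inl i)),
      fun i => c (Sum.inr (Sum.inr i)), ?_⟩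
    intro ω hω
    have hthis := congrFun hc ω
    rw [Finset.sum_apply, Fintype.sum_sum_type, Fintype.sum_sum_type] at hthis
    simp only [Fintype.univ_punit, Finset.sum_singleton, Pi.smul_apply, smul_eq_mul,
      Sum.elim_inl, Sum.elim_inr, mul_one, if_neg hω] at hthis
    rw [show ((κ ω).toNat : ℚ) = (((κ ω).toNat : ℤ) : ℚ) by push_cast; ring, ← hthis]
    rw [Finset.sum_filter, Finset.sum_filter, ← add_assoc]
    congr 1
    · congr 1
      refine Finset.sum_congr rfl fun i _ => ?_
      rw [mul_ite, mul_one, mul_zero]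
    · refine Finset.sum_congr rfl fun i _ => ?_
      rw [mul_ite, mul_one, mul_zero]
  · rintro ⟨h1, κ₀, kp, km, hdec⟩
    refine ⟨h1, ?_⟩
    intro d hd0 hsum hσ
    have hp : ∀ i : Fin n, ∑ ω, d ω * (if ω ∈ (R i).1 ∩ (R i).2 then (1:ℤ) else 0) = 0 := by
      intro i
      have h := congrFun (congrArg Prod.fst hσ) i
      rw [Prod.fst_sum, Finset.sum_apply] at h
      simpa [sigmaR, smul_eq_mul] using h
    have hm : ∀ i : Fin n,
        ∑ ω, d ω * (if ω ∈ (R i).1 ∩ ((R i).2)ᶜ then (1:ℤ) else 0) = 0 := by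
      intro i
      have h := congrFun (congrArg Prod.snd hσ) i
      rw [Prod.snd_sum, Finset.sum_apply] at h
      simpa [sigmaR, smul_eq_mul] using h
    have key : ∑ ω, (d ω : ℚ) * ((κ ω).toNat : ℚ) = 0 := by
      have step : ∀ ω, (d ω : ℚ) * ((κ ω).toNat : ℚ) = (d ω : ℚ) *
          (κ₀ + (∑ i ∈ Finset.univ.filter fun i => ω ∈ (R i).1 ∩ (R i).2, kp i) +
                (∑ i ∈ Finset.univ.filter fun i => ω ∈ (R i).1 ∩ ((R i).2)ᶜ, km i)) := by
        intro ω
        by_cases h : κ ω = ⊤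
        · simp [hd0 ω h]
        · rw [hdec ω h]
      rw [Finset.sum_congr rfl fun ω _ => step ω]
      have e1 : ∑ ω, (d ω : ℚ) * κ₀ = 0 := by
        rw [← Finset.sum_mul]
        have : ∑ ω, (d ω : ℚ) = 0 := by exact_mod_cast hsum
        rw [this, zero_mul]
      have e2 : ∑ ω, (d ω : ℚ) *
          (∑ i ∈ Finset.univ.filter fun i => ω ∈ (R i).1 ∩ (R i).2, kp i) = 0 := by
        simp_rw [Finset.sum_filter, Finset.mul_sum]
        rw [Finset.sum_comm]
        refine Finset.sum_eq_zero fun i _ => ?_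
        have h2 : ∑ ω, (d ω : ℚ) * (if ω ∈ (R i).1 ∩ (R i).2 then (1:ℚ) else 0) = 0 := by
          have := hp i
          have hcast : ((∑ ω, d ω * (if ω ∈ (R i).1 ∩ (R i).2 then (1:ℤ) else 0) : ℤ) : ℚ)
              = 0 := by rw [this]; norm_num
          push_cast [apply_ite (fun z : ℤ => (z : ℚ))] at hcast
          exact hcast
        calc ∑ ω, (d ω : ℚ) * (if ω ∈ (R i).1 ∩ (R i).2 then kp i else 0)
            = ∑ ω, ((d ω : ℚ) * (if ω ∈ (R i).1 ∩ (R i).2 then (1:ℚ) else 0)) * kp i := by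
              refine Finset.sum_congr rfl fun ω _ => ?_
              by_cases h : ω ∈ (R i).1 ∧ ω ∈ (R i).2 <;>
                simp [h, Set.mem_inter_iff, Set.mem_compl_iff]
          _ = 0 := by rw [← Finset.sum_mul, h2, zero_mul]
      have e3 : ∑ ω, (d ω : ℚ) *
          (∑ i ∈ Finset.univ.filter fun i => ω ∈ (R i).1 ∩ ((R i).2)ᶜ, km i) = 0 := by
        simp_rw [Finset.sum_filter, Finset.mul_sum]
        rw [Finset.sum_comm]
        refine Finset.sum_eq_zero fun i _ => ?_
        have h2 : ∑ ω, (d ω : ℚ) * (if ω ∈ (R i).1 ∩ ((R i).2)ᶜ then (1:ℚ) else 0) = 0 := by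
          have := hm i
          have hcast : ((∑ ω, d ω * (if ω ∈ (R i).1 ∩ ((R i).2)ᶜ then (1:ℤ) else 0) : ℤ) : ℚ)
              = 0 := by rw [this]; norm_num
          push_cast [apply_ite (fun z : ℤ => (z : ℚ))] at hcast
          exact hcast
        calc ∑ ω, (d ω : ℚ) * (if ω ∈ (R i).1 ∩ ((R i).2)ᶜ then km i else 0)
            = ∑ ω, ((d ω : ℚ) * (if ω ∈ (R i).1 ∩ ((R i).2)ᶜ then (1:ℚ) else 0)) * km i := by
              refine Finset.sum_congr rfl fun ω _ => ?_
              by_cases h : ω ∈ (R i).1 ∧ ω ∉ (R i).2 <;>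
                simp [h, Set.mem_inter_iff, Set.mem_compl_iff]
          _ = 0 := by rw [← Finset.sum_mul, h2, zero_mul]
      simp_rw [mul_add]
      rw [Finset.sum_add_distrib, Finset.sum_add_distrib, e1, e2, e3]
      norm_num
    exact_mod_cast key
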